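/- Let k ≥ 7 be odd, let G be a graph on n vertices containing no odd cycle of length less than k, fix a k-cycle v_0v_1…v_{k−1} in G with vertex set C and good sequences D_j (0 ≤ j ≤ k−1), and for a vertex w define its contribution c(w) = (1/2)·|{j : w ∈ A_1(D_j)}| + ∑_{i=2}^{k−1} |{j : w ∈ A_i(D_j)}|. If w has exactly one neighbor in C, then c(w) ≤ k − 3 + 1/2. -/

import Mathlib

/-- `f` realizes a cycle of length `ℓ` in `G`: an injective map from `ZMod ℓ` whose
consecutive images are adjacent. -/
def IsCycleMap {V : Type*} (G : SimpleGraph V) {ℓ : ℕ} (f : ZMod ℓ → V) : Prop :=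
  Function.Injective f ∧ ∀ i, G.Adj (f i) (f (i + 1))

/-- `G` contains no odd cycle of length less than `k`. -/
def NoShortOddCycle {V : Type*} (G : SimpleGraph V) (k : ℕ) : Prop :=
  ∀ ℓ : ℕ, Odd ℓ → 3 ≤ ℓ → ℓ < k → ∀ f : ZMod ℓ → V, ¬ IsCycleMap G f

/-- The good sequence associated to the cycle `f = (v_0, v_1, …, v_{k-1})`:
the entries `v_2` and `v_3` are swapped. -/
def goodOfCycle {V : Type*} {k : ℕ} (f : ZMod k → V) : ZMod k → V :=
  fun i => if i = 2 then f 3 else if i = 3 then f 2 else f i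

/-- `z` is a good sequence in `G`: it arises from some `k`-cycle of `G`
(quantifying over all cycle maps accounts for all `2k` rotations and reflections). -/
def IsGoodSeq {V : Type*} (G : SimpleGraph V) {k : ℕ} (z : ZMod k → V) : Prop :=
  ∃ f : ZMod k → V, IsCycleMap G f ∧ z = goodOfCycle f

/-- The vertex sequence `z₀, z₁, z₃, z₂, z₄, …, z_{i-1}, w` (indices `0, …, i`,
with the final entry `w` at index `i`). -/
def seqAt {V : Type*} {k : ℕ} (z : ZMod k → V) (w : V) (i : ℕ) : ℕ → V :=
  fun a => if a = i then w else if a = 2 then z 3 else if a = 3 then z 2 else z (a : ZMod k)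

/-- `q 0, q 1, …, q i` is an induced path in `G`. -/
def IsInducedPathOn {V : Type*} (G : SimpleGraph V) (q : ℕ → V) (i : ℕ) : Prop :=
  (∀ a b, a ≤ i → b ≤ i → q a = q b → a = b) ∧
  (∀ a b, a ≤ i → b ≤ i → (G.Adj (q a) (q b) ↔ (b = a + 1 ∨ a = b + 1)))

/-- `q 0, q 1, …, q (k-1)` is an induced cycle in `G`. -/
def IsInducedCycleOn {V : Type*} (G : SimpleGraph V) (q : ℕ → V) (k : ℕ) : Prop :=
  (∀ a b, a < k → b < k → q a = q b → a = b) ∧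
  (∀ a b, a < k → b < k →
    (G.Adj (q a) (q b) ↔
      ((b = a + 1 ∨ a = b + 1) ∨ (a = 0 ∧ b = k - 1) ∨ (b = 0 ∧ a = k - 1))))

/-- The set `A_i(D)` for the good sequence `D = z` (of a graph `G` without odd cycles of
length less than `k`). -/
def Aset {V : Type*} (G : SimpleGraph V) (k : ℕ) (z : ZMod k → V) (i : ℕ) : Set V :=
  if i = 0 then Set.univ
  else if i = 1 then G.neighborSet (z 0)
  else if i = 2 then {w | w ∉ G.neighborSet (z 0) ∧ G.dist (z 1) w = 2}
  else if i = 3 then G.neighborSet (z 1) ∩ G.neighborSet (z 2)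
  else if i = k - 1 then {w | IsInducedCycleOn G (seqAt z w (k - 1)) k}
  else {w | IsInducedPathOn G (seqAt z w i) i}

/-- The weight `w(D) = ∏_{i=0}^{k-1} |A_i(D)|⁻¹` of a good sequence `D = z`. -/
noncomputable def weight {V : Type*} (G : SimpleGraph V) (k : ℕ) (z : ZMod k → V) : ℝ :=
  ∏ i ∈ Finset.range k, ((Nat.card ↥(Aset G k z i) : ℝ))⁻¹

/-- The good sequence `D_j = (v_j, v_{j+1}, v_{j+3}, v_{j+2}, v_{j+4}, …, v_{j+k-1})`
associated to the cycle `f = (v_0, …, v_{k-1})` (indices mod `k`). -/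
def goodRot {V : Type*} {k : ℕ} (f : ZMod k → V) (j : ZMod k) : ZMod k → V :=
  goodOfCycle (fun i => f (j + i))

/-- The contribution of a vertex `w` to the sum `∑_j (n_{1,j}/2 + ∑_{i=2}^{k-1} n_{i,j})`
for the cycle `f`:
`c(w) = (1/2)·|{j : w ∈ A_1(D_j)}| + ∑_{i=2}^{k-1} |{j : w ∈ A_i(D_j)}|`. -/
noncomputable def contrib {V : Type*} (G : SimpleGraph V) (k : ℕ) (f : ZMod k → V)
    (w : V) : ℝ :=
  (1 / 2) * (Nat.card ↥{j : ZMod k | w ∈ Aset G k (goodRot f j) 1} : ℝ) +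
    ∑ i ∈ Finset.Icc 2 (k - 1),
      (Nat.card ↥{j : ZMod k | w ∈ Aset G k (goodRot f j) i} : ℝ)


/-!
In `D_j` the entries `z₀ z₁ z₃ z₂ z₄ …` are just `v_j, v_{j+1}, v_{j+2}, …`, so `w ∈ A_i(D_j)` for
`4 ≤ i ≤ k - 1` makes `w` adjacent to `v_{j+i-1}`. As `v_{i₀}` is the only neighbour of `w` on the
cycle, this allows one `j` for each such `i`, and none for `i = 3` and `i = k - 1`, where `w` would
need two neighbours on the cycle; also `w ∈ A_1(D_j)` only for `j = i₀`.

The rest comes from ears. A path of length `L` from `v_t` to `v_s` with inner vertices off the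
cycle closes a cycle with each of the two arcs between its ends; as `k` is odd, one of these two
cycles is odd, hence at least `k` long. So `t - s = ±d` with `d ≤ L` and `d ≡ L (mod 2)`. For
`w ∈ A_2(D_j)`, a path `v_{j+1} x w v_{i₀}` then leaves `j ∈ {i₀ - 2, i₀ + 2, i₀ - 4}`, and
`j = i₀ + 2`, `j = i₀ - 4` cannot both occur: the paths from `v_{i₀+3}` and `v_{i₀-3}` to `w` would
combine into an ear of length 2 or 4 between two vertices joined along the cycle by arcs of
lengths `6` and `k - 6` (odd). Hence `c(w) ≤ 1/2 + 2 + (k - 5)`.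
-/

theorem ZMod.natCast_inj_of_lt {k a b : ℕ} (ha : a < k) (hb : b < k) :
    (a : ZMod k) = b ↔ a = b := by
  refine ⟨fun h ↦ ?_, congrArg _⟩
  simpa [ZMod.val_cast_of_lt ha, ZMod.val_cast_of_lt hb] using congrArg ZMod.val h

theorem ZMod.natCast_ne_zero_of_lt {k a : ℕ} (h0 : 0 < a) (ha : a < k) : (a : ZMod k) ≠ 0 := by
  exact_mod_cast (ZMod.natCast_inj_of_lt ha (b := 0) (by omega)).not.mpr h0.ne'

theorem ZMod.natCast_self_sub {k c : ℕ} (h : c ≤ k) : ((k - c : ℕ) : ZMod k) = -c := by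
  simp [Nat.cast_sub h]

theorem SimpleGraph.exists_adj_adj_of_dist_eq_two {V : Type*} {G : SimpleGraph V} {u v : V}
    (h : G.dist u v = 2) : ∃ x, G.Adj u x ∧ G.Adj x v := by
  have : G.edist u v = 2 := by
    rw [SimpleGraph.dist, ENat.toNat_eq_iff two_ne_zero] at h
    exact_mod_cast h
  obtain ⟨-, -, x, hx⟩ := SimpleGraph.edist_eq_two_iff.mp this
  exact ⟨x, hx.1, hx.2.symm⟩

def IsEar {V : Type*} (G : SimpleGraph V) {k : ℕ} (f : ZMod k → V) (t s : ZMod k)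
    (l : List V) : Prop :=
  l.Nodup ∧ (∀ x ∈ l, x ∉ Set.range f) ∧ (f t :: l ++ [f s]).IsChain G.Adj

section

variable {V : Type*} {G : SimpleGraph V} {k : ℕ}

theorem NoShortOddCycle.le_length_of_isChain (hG : NoShortOddCycle G k) {l : List V} {v : V}
    (hv : l.head? = some v) (hl : l.Nodup) (hchain : (l ++ [v]).IsChain G.Adj)
    (hodd : Odd l.length) : k ≤ l.length := by
  have hv0 : l[0]'hodd.pos = v := by
    simp only [List.head?_eq_getElem?, List.getElem?_eq_some_iff] at hv
    exact hv.2
  have hadj : ∀ n (h : n < l.length), G.Adj l[n] ((l ++ [v])[n + 1]'(by simp; omega)) :=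
    fun n h ↦ by
      simpa [List.getElem_append_left h] using
        List.isChain_iff_getElem.mp hchain n (by simp; omega)
  have h3 : 3 ≤ l.length := by
    obtain ⟨m, hm⟩ := hodd
    rcases m with _ | m
    · simpa [hm, hv0] using hadj 0 (by omega)
    · omega
  by_contra! hk
  have : NeZero l.length := ⟨hodd.pos.ne'⟩
  refine hG l.length hodd h3 hk (fun i ↦ l[i.val]'(ZMod.val_lt i))
    ⟨fun i j hij ↦ ZMod.val_injective _ (hl.getElem_inj_iff.mp hij), fun i ↦ ?_⟩
  convert hadj i.val (ZMod.val_lt i) using 1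
  by_cases hi : i.val + 1 < l.length
  · have : (i + 1).val = i.val + 1 := by
      rw [ZMod.val_add_of_lt] <;> rw [ZMod.val_one'' (by omega)]; exact hi
    simp [this, List.getElem_append_left hi]
  · have hi' : i.val + 1 = l.length := by have := ZMod.val_lt i; omega
    have : i + 1 = 0 := by
      rw [← ZMod.natCast_zmod_val i, ← Nat.cast_add_one, hi', ZMod.natCast_self]
    simp [this, hi', hv0]

theorem IsEar.reverse {f : ZMod k → V} {t s : ZMod k} {l : List V} (h : IsEar G f t s l) :
    IsEar G f s t l.reverse := by
  obtain ⟨hnd, hoff, hchain⟩ := h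
  refine ⟨List.nodup_reverse.mpr hnd, fun x hx ↦ hoff x (List.mem_reverse.mp hx), ?_⟩
  simpa using List.isChain_reverse.mpr (hchain.imp fun _ _ h ↦ h.symm)

/-- The arc `f s, f (s + 1), …, f (s + d) = f t` followed by the ear is a closed path. -/
theorem IsCycleMap.le_add_length_of_isEar (hG : NoShortOddCycle G k) {f : ZMod k → V}
    (hf : IsCycleMap G f) {t s : ZMod k} {l : List V} (he : IsEar G f t s l) {d : ℕ}
    (hd : t = s + d) (hodd : Odd (d + 1 + l.length)) : k ≤ d + 1 + l.length := by
  obtain ⟨hnd, hoff, hchain⟩ := he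
  by_cases hdk : k ≤ d
  · omega
  let arc := (List.range (d + 1)).map fun a : ℕ ↦ f (s + a)
  have harc : arc = (List.range d).map (fun a : ℕ ↦ f (s + a)) ++ [f t] := by
    simp [arc, List.range_succ, hd]
  have hnd_arc : arc.Nodup := by
    refine List.Nodup.map_on (fun a ha b hb hab ↦ ?_) List.nodup_range
    simp only [List.mem_range] at ha hb
    exact (ZMod.natCast_inj_of_lt (by omega) (by omega)).mp (add_left_cancel (hf.1 hab))
  have := hG.le_length_of_isChain (l := arc ++ l) (v := f s)
    (by simp [arc, List.range_succ_eq_map]) ?_ ?_ ?_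
  · simpa [arc] using this
  · refine List.nodup_append.mpr ⟨hnd_arc, hnd, ?_⟩
    rintro _ hx y hy rfl
    obtain ⟨a, -, rfl⟩ := List.mem_map.mp hx
    exact hoff _ hy ⟨_, rfl⟩
  · rw [harc, List.append_assoc, List.append_assoc, List.singleton_append, List.isChain_split,
      ← harc]
    refine ⟨?_, by simpa using hchain⟩
    refine (List.isChain_map _).mpr ((List.isChain_range_succ _ d).mpr fun m _ ↦ ?_)
    simpa [add_assoc] using hf.2 (s + m)
  · simpa [arc, add_comm, add_left_comm] using hodd

/-- Since `k` is odd, closing the ear with the complementary arc of length `k - d` instead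
gives an odd closed path. -/
theorem IsCycleMap.le_length_of_isEar (hG : NoShortOddCycle G k) (hk : Odd k)
    {f : ZMod k → V} (hf : IsCycleMap G f) {t s : ZMod k} {l : List V} (he : IsEar G f t s l)
    {d : ℕ} (hd : t = s + d) (hdk : d ≤ k) (heven : Even (d + 1 + l.length)) :
    d ≤ 1 + l.length := by
  have hs : s = t + (k - d : ℕ) := by simp [hd, ZMod.natCast_self_sub hdk]
  have hodd : Odd (k - d + 1 + l.reverse.length) := by
    obtain ⟨a, ha⟩ := heven
    obtain ⟨b, hb⟩ := hk
    exact ⟨a + b - d, by simp only [List.length_reverse]; omega⟩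
  have := hf.le_add_length_of_isEar hG he.reverse hs hodd
  simp only [List.length_reverse] at this
  omega

theorem IsCycleMap.eq_add_one_or_eq_sub_one_of_adj (hG : NoShortOddCycle G k) (hk : Odd k)
    {f : ZMod k → V} (hf : IsCycleMap G f) {s t : ZMod k} (h : G.Adj (f s) (f t)) :
    t = s + 1 ∨ t = s - 1 := by
  have : NeZero k := ⟨hk.pos.ne'⟩
  have he : IsEar G f t s [] := ⟨List.nodup_nil, by simp, by simpa using h.symm⟩
  set d := (t - s).val
  have hd : t = s + d := by simp [d]
  have hdk : d < k := ZMod.val_lt _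
  rcases Nat.even_or_odd d with heven | hodd
  · have := hf.le_add_length_of_isEar hG he hd (by simpa using heven.add_one)
    right
    rw [hd, show d = k - 1 by simp at this; omega, ZMod.natCast_self_sub hk.pos, Nat.cast_one,
      sub_eq_add_neg]
  · have := hf.le_length_of_isEar hG hk he hd hdk.le (by simpa using hodd.add_one)
    have hd0 : d ≠ 0 := fun h0 ↦ by simp [hd, h0] at h
    left
    rw [hd, show d = 1 by simp at this; omega, Nat.cast_one]

theorem goodRot_natCast (hk : 4 ≤ k) (f : ZMod k → V) (j : ZMod k) {a : ℕ} (ha : a < k)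
    (h2 : a ≠ 2) (h3 : a ≠ 3) : goodRot f j a = f (j + a) := by
  have h2' : (a : ZMod k) ≠ 2 := by
    exact_mod_cast (ZMod.natCast_inj_of_lt ha (by omega)).not.mpr h2
  have h3' : (a : ZMod k) ≠ 3 := by
    exact_mod_cast (ZMod.natCast_inj_of_lt ha (by omega)).not.mpr h3
  simp [goodRot, goodOfCycle, h2', h3']

theorem seqAt_goodRot (hk : 4 ≤ k) (f : ZMod k → V) (j : ZMod k) (w : V) {i a : ℕ}
    (ha : a < k) (hai : a ≠ i) : seqAt (goodRot f j) w i a = f (j + a) := by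
  have h32 : (3 : ZMod k) ≠ 2 := by
    have := (ZMod.natCast_inj_of_lt (k := k) (a := 3) (b := 2) (by omega) (by omega)).not
    exact_mod_cast this.mpr (by omega)
  simp only [seqAt, if_neg hai]
  split_ifs with h2 h3
  · simp [goodRot, goodOfCycle, h32, h2]
  · simp [goodRot, goodOfCycle, h3]
  · exact goodRot_natCast hk f j ha h2 h3

theorem mem_Aset_two_goodRot_iff (hk : 4 ≤ k) {f : ZMod k → V} {j : ZMod k} {w : V} :
    w ∈ Aset G k (goodRot f j) 2 ↔ ¬ G.Adj (f j) w ∧ G.dist (f (j + 1)) w = 2 := by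
  have h0 := goodRot_natCast hk f j (a := 0) (by omega) (by omega) (by omega)
  have h1 := goodRot_natCast hk f j (a := 1) (by omega) (by omega) (by omega)
  simp only [Nat.cast_zero, Nat.cast_one, add_zero] at h0 h1
  simp [Aset, h0, h1]

theorem adj_of_mem_Aset_goodRot (hk : 4 ≤ k) {f : ZMod k → V} {j : ZMod k} {w : V} {i : ℕ}
    (hi : 4 ≤ i) (hik : i < k) (hw : w ∈ Aset G k (goodRot f j) i) :
    G.Adj (f (j + (i - 1 : ℕ))) w := by
  have hq : seqAt (goodRot f j) w i (i - 1) = f (j + (i - 1 : ℕ)) :=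
    seqAt_goodRot hk f j w (by omega) (by omega)
  have hw' : seqAt (goodRot f j) w i i = w := by simp [seqAt]
  simp only [Aset, if_neg (show i ≠ 0 by omega), if_neg (show i ≠ 1 by omega),
    if_neg (show i ≠ 2 by omega), if_neg (show i ≠ 3 by omega)] at hw
  have hadj : G.Adj (seqAt (goodRot f j) w i (i - 1)) (seqAt (goodRot f j) w i i) := by
    split_ifs at hw with hlast
    · rw [hlast]
      exact (hw.2 (k - 1 - 1) (k - 1) (by omega) (by omega)).mpr (by omega)
    · exact (hw.2 (i - 1) i (by omega) le_rfl).mpr (by omega)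
  rwa [hq, hw'] at hadj

theorem adj_of_mem_Aset_goodRot_last (hk : 5 ≤ k) {f : ZMod k → V} {j : ZMod k} {w : V}
    (hw : w ∈ Aset G k (goodRot f j) (k - 1)) : G.Adj (f j) w := by
  have hq : seqAt (goodRot f j) w (k - 1) 0 = f j := by
    simpa using seqAt_goodRot (by omega) f j w (i := k - 1) (a := 0) (by omega) (by omega)
  have hw' : seqAt (goodRot f j) w (k - 1) (k - 1) = w := by simp [seqAt]
  simp only [Aset, if_neg (show k - 1 ≠ 0 by omega), if_neg (show k - 1 ≠ 1 by omega),
    if_neg (show k - 1 ≠ 2 by omega), if_neg (show k - 1 ≠ 3 by omega)] at hw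
  have := (hw.2 0 (k - 1) (by omega) (by omega)).mpr (by omega)
  rwa [hq, hw'] at this

variable {f : ZMod k → V} {w : V} {i0 : ZMod k}

theorem notMem_range_of_forall_adj_iff (hk : 3 ≤ k) (hf : IsCycleMap G f)
    (hw : ∀ i, G.Adj w (f i) ↔ i = i0) : w ∉ Set.range f := by
  rintro ⟨p, rfl⟩
  have h1 : p + 1 = i0 := (hw _).mp (hf.2 p)
  have h2 : p - 1 = i0 := (hw _).mp (by simpa using (hf.2 (p - 1)).symm)
  exact (by exact_mod_cast ZMod.natCast_ne_zero_of_lt (a := 2) two_pos (by omega) :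
    (2 : ZMod k) ≠ 0) (by linear_combination h1 - h2)

theorem mem_Aset_one_goodRot_iff (hk : 4 ≤ k) (hw : ∀ i, G.Adj w (f i) ↔ i = i0)
    {j : ZMod k} : w ∈ Aset G k (goodRot f j) 1 ↔ j = i0 := by
  have h0 := goodRot_natCast hk f j (a := 0) (by omega) (by omega) (by omega)
  simp only [Nat.cast_zero, add_zero] at h0
  simp [Aset, h0, G.adj_comm, hw]

theorem notMem_Aset_three_goodRot (hk : 4 ≤ k) (hw : ∀ i, G.Adj w (f i) ↔ i = i0)
    (j : ZMod k) : w ∉ Aset G k (goodRot f j) 3 := by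
  have h1 := goodRot_natCast hk f j (a := 1) (by omega) (by omega) (by omega)
  have h2 : goodRot f j 2 = f (j + 3) := by simp [goodRot, goodOfCycle]
  simp only [Nat.cast_one] at h1
  intro hmem
  have hadj : G.Adj (f (j + 1)) w ∧ G.Adj (f (j + 3)) w := by simpa [Aset, h1, h2] using hmem
  have e1 := (hw _).mp hadj.1.symm
  have e3 := (hw _).mp hadj.2.symm
  exact (by exact_mod_cast ZMod.natCast_ne_zero_of_lt (a := 2) two_pos (by omega) :
    (2 : ZMod k) ≠ 0) (by linear_combination e3 - e1)

theorem notMem_Aset_last_goodRot (hk : 5 ≤ k) (hw : ∀ i, G.Adj w (f i) ↔ i = i0)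
    (j : ZMod k) : w ∉ Aset G k (goodRot f j) (k - 1) := by
  intro hmem
  have e0 := (hw _).mp (adj_of_mem_Aset_goodRot_last hk hmem).symm
  have e1 := (hw _).mp
    (adj_of_mem_Aset_goodRot (i := k - 1) (by omega) (by omega) (by omega) hmem).symm
  exact ZMod.natCast_ne_zero_of_lt (k := k) (a := k - 1 - 1) (by omega) (by omega)
    (by linear_combination e1 - e0)

theorem notMem_range_of_adj_of_adj (hG : NoShortOddCycle G k) (hk : Odd k)
    (hf : IsCycleMap G f) (hw : ∀ i, G.Adj w (f i) ↔ i = i0) {x : V} {p : ZMod k}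
    (hpx : G.Adj (f p) x) (hxw : G.Adj x w) (hp1 : p ≠ i0 - 1) (hp2 : p ≠ i0 + 1) :
    x ∉ Set.range f := by
  rintro ⟨q, rfl⟩
  obtain rfl := (hw q).mp hxw.symm
  rcases hf.eq_add_one_or_eq_sub_one_of_adj hG hk hpx with h | h
  · exact hp1 (by linear_combination -h)
  · exact hp2 (by linear_combination -h)

theorem mem_Aset_two_goodRot_cases (hG : NoShortOddCycle G k) (hk : Odd k) (hk7 : 7 ≤ k)
    (hf : IsCycleMap G f) (hw : ∀ i, G.Adj w (f i) ↔ i = i0) {j : ZMod k}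
    (hmem : w ∈ Aset G k (goodRot f j) 2) : j = i0 - 2 ∨ j = i0 + 2 ∨ j = i0 - 4 := by
  have : NeZero k := ⟨by omega⟩
  obtain ⟨hnadj, hdist⟩ := (mem_Aset_two_goodRot_iff (by omega)).mp hmem
  obtain ⟨x, hux, hxw⟩ := SimpleGraph.exists_adj_adj_of_dist_eq_two hdist
  have hj : j ≠ i0 := fun h ↦ hnadj (h ▸ ((hw i0).mpr rfl).symm)
  by_cases hj1 : j + 1 = i0 - 1
  · exact Or.inl (by linear_combination hj1)
  have hx := notMem_range_of_adj_of_adj hG hk hf hw hux hxw hj1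
    (fun h ↦ hj (by linear_combination h))
  have hear : IsEar G f (j + 1) i0 [x, w] :=
    ⟨by simpa using hxw.ne,
      by simpa [-Set.mem_range] using ⟨hx, notMem_range_of_forall_adj_iff (by omega) hf hw⟩,
      by simpa using ⟨hux, hxw, (hw i0).mpr rfl⟩⟩
  set d := (j + 1 - i0).val
  have hd : j + 1 = i0 + d := by simp [d]
  have hdk : d < k := ZMod.val_lt _
  rcases Nat.even_or_odd d with heven | hodd
  · have := hf.le_add_length_of_isEar hG hear hd (by simpa [add_assoc] using heven.add_odd (by decide))
    obtain ⟨m, hm⟩ := hk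
    obtain ⟨e, he⟩ := heven
    rcases (show d = k - 1 ∨ d = k - 3 by simp at this; omega) with hd' | hd'
    · exact Or.inl (by rw [hd', ZMod.natCast_self_sub (by omega)] at hd; linear_combination hd)
    · exact Or.inr (Or.inr
        (by rw [hd', ZMod.natCast_self_sub (by omega)] at hd; linear_combination hd))
  · have := hf.le_length_of_isEar hG hk hear hd hdk.le
      (by simpa [add_assoc] using hodd.add_odd (by decide))
    obtain ⟨e, he⟩ := hodd
    rcases (show d = 1 ∨ d = 3 by simp at this; omega) with hd' | hd'
    · exact absurd (by rw [hd'] at hd; push_cast at hd; linear_combination hd) hj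
    · exact Or.inr (Or.inl (by rw [hd'] at hd; push_cast at hd; linear_combination hd))

theorem notMem_Aset_two_goodRot_add_two_and_sub_four (hG : NoShortOddCycle G k)
    (hk : Odd k) (hk7 : 7 ≤ k) (hf : IsCycleMap G f) (hw : ∀ i, G.Adj w (f i) ↔ i = i0) :
    ¬ (w ∈ Aset G k (goodRot f (i0 + 2)) 2 ∧ w ∈ Aset G k (goodRot f (i0 - 4)) 2) := by
  rintro ⟨hplus, hminus⟩
  have h2 : (2 : ZMod k) ≠ 0 := by exact_mod_cast ZMod.natCast_ne_zero_of_lt two_pos (by omega)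
  have h4 : (4 : ZMod k) ≠ 0 := by
    exact_mod_cast ZMod.natCast_ne_zero_of_lt (a := 4) (by norm_num) (by omega)
  obtain ⟨x, hx3, hxw⟩ := SimpleGraph.exists_adj_adj_of_dist_eq_two
    ((mem_Aset_two_goodRot_iff (by omega)).mp hplus).2
  obtain ⟨y, hy3, hyw⟩ := SimpleGraph.exists_adj_adj_of_dist_eq_two
    ((mem_Aset_two_goodRot_iff (by omega)).mp hminus).2
  have hx := notMem_range_of_adj_of_adj hG hk hf hw (p := i0 + 2 + 1) hx3 hxw
    (fun h ↦ h4 (by linear_combination h)) (fun h ↦ h2 (by linear_combination h))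
  have hy := notMem_range_of_adj_of_adj hG hk hf hw (p := i0 - 4 + 1) hy3 hyw
    (fun h ↦ h2 (by linear_combination -h)) (fun h ↦ h4 (by linear_combination -h))
  have hwC := notMem_range_of_forall_adj_iff (by omega) hf hw
  have hd : i0 - 4 + 1 = i0 + 2 + 1 + (k - 6 : ℕ) := by
    rw [ZMod.natCast_self_sub (by omega)]; push_cast; ring
  obtain ⟨m, hm⟩ := hk
  by_cases hxy : x = y
  · subst hxy
    have hear : IsEar G f (i0 - 4 + 1) (i0 + 2 + 1) [x] :=
      ⟨List.nodup_singleton x, by simpa [-Set.mem_range] using hx,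
        by simpa using ⟨hy3, hx3.symm⟩⟩
    have := hf.le_add_length_of_isEar hG hear hd ⟨m - 2, by simp; omega⟩
    simp at this; omega
  · have hear : IsEar G f (i0 - 4 + 1) (i0 + 2 + 1) [y, w, x] :=
      ⟨by simpa using ⟨⟨hyw.ne, Ne.symm hxy⟩, hxw.ne.symm⟩,
        by simpa [-Set.mem_range] using ⟨hy, hwC, hx⟩,
        by simpa using ⟨hy3, hyw, hxw.symm, hx3.symm⟩⟩
    have := hf.le_add_length_of_isEar hG hear hd ⟨m - 1, by simp; omega⟩
    simp at this; omega

theorem card_Aset_one_goodRot (hk : 4 ≤ k) (hw : ∀ i, G.Adj w (f i) ↔ i = i0) :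
    Nat.card {j : ZMod k | w ∈ Aset G k (goodRot f j) 1} = 1 := by
  have : {j : ZMod k | w ∈ Aset G k (goodRot f j) 1} = {i0} :=
    Set.ext fun _ ↦ mem_Aset_one_goodRot_iff hk hw
  rw [this, Nat.card_unique]

theorem card_Aset_two_goodRot_le (hG : NoShortOddCycle G k) (hk : Odd k) (hk7 : 7 ≤ k)
    (hf : IsCycleMap G f) (hw : ∀ i, G.Adj w (f i) ↔ i = i0) :
    Nat.card {j : ZMod k | w ∈ Aset G k (goodRot f j) 2} ≤ 2 := by
  have : NeZero k := ⟨by omega⟩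
  have hsub : {j : ZMod k | w ∈ Aset G k (goodRot f j) 2} ⊆ {i0 - 2, i0 + 2} ∨
      {j : ZMod k | w ∈ Aset G k (goodRot f j) 2} ⊆ {i0 - 2, i0 - 4} := by
    by_cases hplus : w ∈ Aset G k (goodRot f (i0 + 2)) 2
    · refine Or.inl fun j hj ↦ ?_
      rcases mem_Aset_two_goodRot_cases hG hk hk7 hf hw hj with h | h | rfl
      · exact Or.inl h
      · exact Or.inr h
      · exact absurd ⟨hplus, hj⟩ (notMem_Aset_two_goodRot_add_two_and_sub_four hG hk hk7 hf hw)
    · refine Or.inr fun j hj ↦ ?_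
      rcases mem_Aset_two_goodRot_cases hG hk hk7 hf hw hj with h | rfl | h
      · exact Or.inl h
      · exact absurd hj hplus
      · exact Or.inr h
  rw [Nat.card_coe_set_eq]
  rcases hsub with h | h <;>
    exact (Set.ncard_le_ncard h (Set.toFinite _)).trans
      ((Set.ncard_insert_le _ _).trans (by simp))

theorem card_Aset_three_goodRot (hk : 4 ≤ k) (hw : ∀ i, G.Adj w (f i) ↔ i = i0) :
    Nat.card {j : ZMod k | w ∈ Aset G k (goodRot f j) 3} = 0 := by
  rw [Set.eq_empty_of_forall_notMem (s := {j | w ∈ Aset G k (goodRot f j) 3})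
    (notMem_Aset_three_goodRot hk hw)]
  simp

theorem card_Aset_goodRot_le_one (hk : 4 ≤ k) (hw : ∀ i, G.Adj w (f i) ↔ i = i0) {i : ℕ}
    (hi : 4 ≤ i) (hik : i < k) :
    Nat.card {j : ZMod k | w ∈ Aset G k (goodRot f j) i} ≤ 1 := by
  have : NeZero k := ⟨by omega⟩
  rw [Nat.card_coe_set_eq, Set.ncard_le_one]
  intro a ha b hb
  have ea := (hw _).mp (adj_of_mem_Aset_goodRot hk hi hik ha).symm
  have eb := (hw _).mp (adj_of_mem_Aset_goodRot hk hi hik hb).symm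
  linear_combination ea - eb

theorem card_Aset_last_goodRot (hk : 5 ≤ k) (hw : ∀ i, G.Adj w (f i) ↔ i = i0) :
    Nat.card {j : ZMod k | w ∈ Aset G k (goodRot f j) (k - 1)} = 0 := by
  rw [Set.eq_empty_of_forall_notMem (s := {j | w ∈ Aset G k (goodRot f j) (k - 1)})
    (notMem_Aset_last_goodRot hk hw)]
  simp

theorem sum_card_Aset_goodRot_le (hG : NoShortOddCycle G k) (hk : Odd k) (hk7 : 7 ≤ k)
    (hf : IsCycleMap G f) (hw : ∀ i, G.Adj w (f i) ↔ i = i0) :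
    ∑ i ∈ Finset.Icc 2 (k - 1), Nat.card {j : ZMod k | w ∈ Aset G k (goodRot f j) i} ≤
      k - 3 := by
  have hIcc : Finset.Icc 2 (k - 1) =
      insert 2 (insert 3 (insert (k - 1) (Finset.Ico 4 (k - 1)))) := by
    ext; simp; omega
  have hmid : ∑ i ∈ Finset.Ico 4 (k - 1),
      Nat.card {j : ZMod k | w ∈ Aset G k (goodRot f j) i} ≤ k - 5 := by
    have := Finset.sum_le_card_nsmul (Finset.Ico 4 (k - 1))
      (fun i ↦ Nat.card {j : ZMod k | w ∈ Aset G k (goodRot f j) i}) 1 fun i hi ↦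
        card_Aset_goodRot_le_one (by omega) hw (Finset.mem_Ico.mp hi).1
          (by have := (Finset.mem_Ico.mp hi).2; omega)
    rwa [Nat.card_Ico, smul_eq_mul, mul_one, show k - 1 - 4 = k - 5 by omega] at this
  rw [hIcc, Finset.sum_insert (by simp; omega), Finset.sum_insert (by simp; omega),
    Finset.sum_insert (by simp), card_Aset_three_goodRot (by omega) hw,
    card_Aset_last_goodRot (by omega) hw]
  have := card_Aset_two_goodRot_le hG hk hk7 hf hw
  omega

end

theorem contrib_of_one_neighbor_general {V : Type*} (k : ℕ) (hodd : Odd k)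
    (hk : 7 ≤ k) (G : SimpleGraph V) (hG : NoShortOddCycle G k)
    (f : ZMod k → V) (hf : IsCycleMap G f) (w : V)
    (hw : Nat.card ↥{i : ZMod k | G.Adj w (f i)} = 1) :
    contrib G k f w ≤ (k : ℝ) - 3 + 1 / 2 := by
  have : NeZero k := ⟨by omega⟩
  obtain ⟨i0, hi0⟩ := Set.ncard_eq_one.mp (by rwa [← Nat.card_coe_set_eq])
  have hw' : ∀ i, G.Adj w (f i) ↔ i = i0 := fun i ↦ Set.ext_iff.mp hi0 i
  have hsum := sum_card_Aset_goodRot_le hG hodd hk hf hw'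
  have hsum' : (∑ i ∈ Finset.Icc 2 (k - 1),
      (Nat.card {j : ZMod k | w ∈ Aset G k (goodRot f j) i} : ℝ)) ≤ k - 3 := by
    rw [← Nat.cast_le (α := ℝ), Nat.cast_sub (by omega), Nat.cast_sum] at hsum
    simpa using hsum
  rw [contrib, card_Aset_one_goodRot (by omega) hw']
  push_cast
  linarith

/-- If a vertex `w` has exactly one neighbour on the `k`-cycle `f`, then its contribution
is at most `k - 3 + 1/2`. -/
theorem contrib_of_one_neighbor {V : Type*} [Fintype V] (k : ℕ) (hodd : Odd k)
    (hk : 7 ≤ k) (G : SimpleGraph V) (hG : NoShortOddCycle G k)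
    (f : ZMod k → V) (hf : IsCycleMap G f) (w : V)
    (hw : Nat.card ↥{i : ZMod k | G.Adj w (f i)} = 1) :
    contrib G k f w ≤ (k : ℝ) - 3 + 1 / 2 :=
  contrib_of_one_neighbor_general k hodd hk G hG f hf w hw
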